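/- arXiv:1910.02884 — 4 statements merged into one kernel-verified Lean document; each statement's English description precedes it below -/
import Mathlib

section
/- MGF bound used in Bennett's inequality: If X is a real-valued random variable with E[X] = 0, |X| ≤ 1 almost surely, and variance σ² = E[X²], then for every s > 0, E[e^{sX}] ≤ exp( σ² (e^s − 1 − s) ). -/
open MeasureTheory ProbabilityTheory Real

section Aux
open Nat

lemma exp_tsum (x : ℝ) : Real.exp x = ∑' n : ℕ, x ^ n / (n ! : ℝ) := by
  rw [Real.exp_eq_exp_ℝ, NormedSpace.exp_eq_tsum_div]

lemma bennett_pointwise {s x : ℝ} (hs : 0 ≤ s) (hx : |x| ≤ 1) :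
    Real.exp (s * x) ≤ 1 + s * x + x ^ 2 * (Real.exp s - 1 - s) := by
  have hsum1 : Summable (fun n : ℕ => (s * x) ^ n / (n ! : ℝ)) := Real.summable_pow_div_factorial _
  have hsum2 : Summable (fun n : ℕ => s ^ n / (n ! : ℝ)) := Real.summable_pow_div_factorial _
  have ht1 : Summable (fun k : ℕ => (s * x) ^ (k + 2) / ((k+2)! : ℝ)) := by
    have := (summable_nat_add_iff 2).2 hsum1
    simpa using this
  have ht2 : Summable (fun k : ℕ => s ^ (k + 2) / ((k+2)! : ℝ)) := by
    have := (summable_nat_add_iff 2).2 hsum2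
    simpa using this
  have key : ∀ k : ℕ, (s * x) ^ (k + 2) / ((k+2)! : ℝ) ≤ x ^ 2 * (s ^ (k + 2) / ((k+2)! : ℝ)) := by
    intro k
    rw [mul_div_assoc'] at *
    apply div_le_div_of_nonneg_right ?_ (by positivity)
    · rw [mul_pow]
      have hxk : x ^ k ≤ 1 := by
        calc x ^ k ≤ |x ^ k| := le_abs_self _
        _ = |x| ^ k := abs_pow x k
        _ ≤ 1 := pow_le_one₀ (abs_nonneg x) hx
      have : x ^ (k + 2) ≤ x ^ 2 := by
        calc x ^ (k + 2) = x ^ 2 * x ^ k := by ring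
        _ ≤ x ^ 2 * 1 := by nlinarith [sq_nonneg x]
        _ = x ^ 2 := mul_one _
      calc s ^ (k + 2) * x ^ (k + 2) ≤ s ^ (k + 2) * x ^ 2 := by
            exact mul_le_mul_of_nonneg_left this (by positivity)
        _ = x ^ 2 * s ^ (k + 2) := mul_comm _ _
  have e1 : Real.exp (s * x) = 1 + s * x + ∑' k : ℕ, (s * x) ^ (k + 2) / ((k+2)! : ℝ) := by
    rw [exp_tsum, Summable.tsum_eq_zero_add hsum1, Summable.tsum_eq_zero_add ((summable_nat_add_iff 1).2 hsum1)]
    simp [Nat.factorial]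
    rw [add_assoc]
  have e2 : Real.exp s - 1 - s = ∑' k : ℕ, s ^ (k + 2) / ((k+2)! : ℝ) := by
    rw [exp_tsum, Summable.tsum_eq_zero_add hsum2, Summable.tsum_eq_zero_add ((summable_nat_add_iff 1).2 hsum2)]
    simp [Nat.factorial]
  rw [e1, e2]
  have := Summable.tsum_le_tsum key ht1 (ht2.mul_left (x ^ 2))
  rw [tsum_mul_left] at this
  linarith

end Aux

/-- MGF bound used in Bennett's inequality: if `E[X] = 0`, `|X| ≤ 1` almost surely and
`σ² = E[X²]`, then for every `s > 0`, `E[e^{sX}] ≤ exp(σ²(e^s − 1 − s))`. -/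
theorem bennett_mgf_bound {Ω : Type*} {mΩ : MeasurableSpace Ω}
    (μ : Measure Ω) [IsProbabilityMeasure μ] (X : Ω → ℝ) (hX : Measurable X)
    (hmean : ∫ ω, X ω ∂μ = 0) (hbdd : ∀ᵐ ω ∂μ, |X ω| ≤ 1)
    (σ2 : ℝ) (hσ2 : σ2 = ∫ ω, X ω ^ 2 ∂μ) (s : ℝ) (hs : 0 < s) :
    (∫ ω, Real.exp (s * X ω) ∂μ) ≤ Real.exp (σ2 * (Real.exp s - 1 - s)) := by
  set c := Real.exp s - 1 - s with hc
  have hXint : Integrable X μ :=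
    (integrable_const 1).mono' hX.aestronglyMeasurable (by filter_upwards [hbdd] with ω h using h)
  have hX2int : Integrable (fun ω => X ω ^ 2) μ := by
    refine (integrable_const 1).mono' (hX.pow_const 2).aestronglyMeasurable ?_
    filter_upwards [hbdd] with ω h
    rw [Real.norm_eq_abs, abs_pow]
    exact pow_le_one₀ (abs_nonneg _) h
  have hexpint : Integrable (fun ω => Real.exp (s * X ω)) μ := by
    refine (integrable_const (Real.exp s)).mono'
      ((hX.const_mul s).exp).aestronglyMeasurable ?_
    filter_upwards [hbdd] with ω h
    rw [Real.norm_eq_abs, abs_of_pos (Real.exp_pos _)]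
    exact Real.exp_le_exp.2 (by nlinarith [abs_le.1 h])
  have hrhsint : Integrable (fun ω => 1 + s * X ω + X ω ^ 2 * c) μ :=
    ((integrable_const 1).add (hXint.const_mul s)).add (hX2int.mul_const c)
  have hmono : (∫ ω, Real.exp (s * X ω) ∂μ) ≤ ∫ ω, (1 + s * X ω + X ω ^ 2 * c) ∂μ := by
    refine integral_mono_ae hexpint hrhsint ?_
    filter_upwards [hbdd] with ω h
    exact bennett_pointwise hs.le h
  have heq : (∫ ω, (1 + s * X ω + X ω ^ 2 * c) ∂μ) = 1 + σ2 * c := by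
    have h1 : Integrable (fun ω => 1 + s * X ω) μ := (integrable_const 1).add (hXint.const_mul s)
    rw [integral_add h1 (hX2int.mul_const c),
      integral_add (integrable_const 1) (hXint.const_mul s),
      integral_const, integral_const_mul, integral_mul_const, hmean, hσ2]
    simp
  calc (∫ ω, Real.exp (s * X ω) ∂μ) ≤ 1 + σ2 * c := heq ▸ hmono
    _ ≤ Real.exp (σ2 * c) := by linarith [Real.add_one_le_exp (σ2 * c)]
end

section
/- Bennett's inequality: Let X₁, …, Xₙ be independent real-valued random variables with E[Xᵢ] = 0 and |Xᵢ| ≤ 1 almost surely, and let σ² = (1/n) Σᵢ₌₁ⁿ Var[Xᵢ] > 0. Then for every t > 0, P( Σᵢ₌₁ⁿ Xᵢ > t ) ≤ exp( −nσ² h( t/(nσ²) ) ), where h(u) = (1 + u) log(1 + u) − u. -/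
/-!
Chernoff's method. For `|x| ≤ 1` and `s ≥ 0` the tail `exp y - 1 - y = ∑_{k ≥ 2} y ^ k / k!`
of the exponential series satisfies `exp (s x) - 1 - s x ≤ x² (exp s - 1 - s)`, term by term.
Taking expectations of a centred variable gives `E[exp (s X)] ≤ 1 + Var X (exp s - 1 - s)`,
hence by independence `E[exp (s ∑ Xᵢ)] ≤ exp (v (exp s - 1 - s))` with `v = ∑ Var Xᵢ`.
The Chernoff bound `exp (-s t + v (exp s - 1 - s))` is minimised at `s = log (1 + t / v)`,
where it equals `exp (-v h (t / v))`.
-/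

open MeasureTheory ProbabilityTheory Real

namespace Real

theorem hasSum_exp_sub_one_sub (y : ℝ) :
    HasSum (fun n : ℕ => y ^ (n + 2) / (n + 2).factorial) (exp y - 1 - y) := by
  have h := NormedSpace.expSeries_div_hasSum_exp (𝔸 := ℝ) y
  rw [← Real.exp_eq_exp_ℝ, ← hasSum_nat_add_iff' 2] at h
  simpa [Finset.sum_range_succ, sub_sub] using h

theorem exp_mul_sub_one_sub_le {s x : ℝ} (hs : 0 ≤ s) (hx : |x| ≤ 1) :
    exp (s * x) - 1 - s * x ≤ x ^ 2 * (exp s - 1 - s) := by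
  refine hasSum_le (fun n => ?_) (hasSum_exp_sub_one_sub (s * x))
    ((hasSum_exp_sub_one_sub s).mul_left (x ^ 2))
  have hxn : x ^ n ≤ 1 :=
    (le_abs_self _).trans (by rw [abs_pow]; exact pow_le_one₀ (abs_nonneg x) hx)
  have : (s * x) ^ (n + 2) ≤ x ^ 2 * s ^ (n + 2) := by
    calc (s * x) ^ (n + 2) = x ^ 2 * (x ^ n * s ^ (n + 2)) := by ring
      _ ≤ x ^ 2 * (1 * s ^ (n + 2)) := by gcongr
      _ = x ^ 2 * s ^ (n + 2) := by ring
  rw [mul_div_assoc']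
  gcongr

end Real

namespace ProbabilityTheory

variable {Ω : Type*} {mΩ : MeasurableSpace Ω} {μ : Measure Ω} [IsProbabilityMeasure μ]

theorem mgf_le_exp_variance_mul {Y : Ω → ℝ} (hY : AEMeasurable Y μ) (hmean : μ[Y] = 0)
    (hb : ∀ᵐ ω ∂μ, |Y ω| ≤ 1) {s : ℝ} (hs : 0 ≤ s) :
    mgf Y μ s ≤ exp (variance Y μ * (exp s - 1 - s)) := by
  have hIcc : ∀ᵐ ω ∂μ, Y ω ∈ Set.Icc (-1 : ℝ) 1 := by
    filter_upwards [hb] with ω hω using abs_le.mp hω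
  have hL2 : MemLp Y 2 μ := memLp_of_bounded hIcc hY.aestronglyMeasurable 2
  have hint : Integrable Y μ := hL2.integrable one_le_two
  have hlin : Integrable (fun ω => 1 + s * Y ω) μ := (integrable_const 1).add (hint.const_mul s)
  have hsq : Integrable (fun ω => Y ω ^ 2 * (exp s - 1 - s)) μ := hL2.integrable_sq.mul_const _
  calc mgf Y μ s
      ≤ ∫ ω, (1 + s * Y ω + Y ω ^ 2 * (exp s - 1 - s)) ∂μ := by
        refine integral_mono_ae (integrable_exp_mul_of_mem_Icc hY hIcc) (hlin.add hsq) ?_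
        filter_upwards [hb] with ω hω
        linarith [exp_mul_sub_one_sub_le hs hω, mul_comm (Y ω) s]
    _ = 1 + variance Y μ * (exp s - 1 - s) := by
        rw [integral_add hlin hsq, integral_add (integrable_const 1) (hint.const_mul s),
          integral_const_mul, integral_mul_const, hmean, variance_of_integral_eq_zero hY hmean]
        simp
    _ ≤ exp (variance Y μ * (exp s - 1 - s)) := by
        linarith [add_one_le_exp (variance Y μ * (exp s - 1 - s))]

theorem iIndepFun.measureReal_lt_sum_le {ι : Type*} [Fintype ι] {X : ι → Ω → ℝ}
    (hindep : iIndepFun X μ) (hmeas : ∀ i, Measurable (X i)) (hmean : ∀ i, μ[X i] = 0)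
    (hb : ∀ i, ∀ᵐ ω ∂μ, |X i ω| ≤ 1) (t : ℝ) {s : ℝ} (hs : 0 ≤ s) :
    μ.real {ω | t < ∑ i, X i ω} ≤
      exp (-s * t + (∑ i, variance (X i) μ) * (exp s - 1 - s)) := by
  have hint : ∀ i ∈ Finset.univ, Integrable (fun ω => exp (s * X i ω)) μ := fun i _ =>
    integrable_exp_mul_of_le s 1 hs (hmeas i).aemeasurable
      (by filter_upwards [hb i] with ω hω using (le_abs_self _).trans hω)
  calc μ.real {ω | t < ∑ i, X i ω}
      ≤ μ.real {ω | t ≤ (∑ i, X i) ω} :=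
        measureReal_mono (fun ω hω => by simpa using hω.le)
    _ ≤ exp (-s * t) * ∏ i, mgf (X i) μ s := by
        rw [← hindep.mgf_sum hmeas]
        exact measure_ge_le_exp_mul_mgf t hs (hindep.integrable_exp_mul_sum hmeas hint)
    _ ≤ exp (-s * t) * ∏ i, exp (variance (X i) μ * (exp s - 1 - s)) := by
        gcongr with i
        · exact fun i _ => mgf_nonneg
        · exact mgf_le_exp_variance_mul (hmeas i).aemeasurable (hmean i) (hb i) hs
    _ = exp (-s * t + (∑ i, variance (X i) μ) * (exp s - 1 - s)) := by
        rw [← exp_sum, ← exp_add, Finset.sum_mul]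

end ProbabilityTheory

/-- Bennett's inequality: for independent zero-mean random variables bounded by 1 in
absolute value, with `σ² = (1/n) Σᵢ Var[Xᵢ] > 0`, for every `t > 0`,
`P(Σᵢ Xᵢ > t) ≤ exp(−nσ²·h(t/(nσ²)))` where `h(u) = (1+u)log(1+u) − u`. -/
theorem bennett_inequality {Ω : Type*} {mΩ : MeasurableSpace Ω}
    (μ : Measure Ω) [IsProbabilityMeasure μ] (n : ℕ) (X : Fin n → Ω → ℝ)
    (hmeas : ∀ i, Measurable (X i))
    (hindep : iIndepFun X μ)
    (hmean : ∀ i, ∫ ω, X i ω ∂μ = 0)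
    (hbdd : ∀ i, ∀ᵐ ω ∂μ, |X i ω| ≤ 1)
    (σ2 : ℝ) (hσ2 : σ2 = (1 / n) * ∑ i, variance (X i) μ) (hσpos : 0 < σ2)
    (h : ℝ → ℝ) (hh : ∀ u, h u = (1 + u) * Real.log (1 + u) - u)
    (t : ℝ) (ht : 0 < t) :
    (μ {ω | t < ∑ i, X i ω}).toReal ≤
      Real.exp (-(n * σ2) * h (t / (n * σ2))) := by
  have hn : (n : ℝ) ≠ 0 := by
    rintro hn
    simp [hn] at hσ2
    linarith
  have hv : 0 < n * σ2 := mul_pos (lt_of_le_of_ne n.cast_nonneg (Ne.symm hn)) hσpos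
  have hsum : ∑ i, variance (X i) μ = n * σ2 := by rw [hσ2]; field_simp
  have hu : 0 < 1 + t / (n * σ2) := by positivity
  set s := log (1 + t / (n * σ2))
  have hs : 0 ≤ s := log_nonneg (by linarith [div_pos ht hv])
  calc (μ {ω | t < ∑ i, X i ω}).toReal
      ≤ exp (-s * t + (∑ i, variance (X i) μ) * (exp s - 1 - s)) :=
        hindep.measureReal_lt_sum_le hmeas hmean hbdd t hs
    _ = exp (-(n * σ2) * h (t / (n * σ2))) := by
        rw [hsum, hh, exp_log hu]
        have hvt : n * σ2 * (t / (n * σ2)) = t := mul_div_cancel₀ t hv.ne'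
        congr 1
        linear_combination s * hvt
end

section
/- Efron–Stein inequality: Let X₁, …, Xₙ be independent (not necessarily identically distributed) random variables taking values in a measurable space χ, let g : χⁿ → ℝ be measurable with Z = g(X₁, …, Xₙ) square-integrable, and for each i let Eᵢ[Z] = E[Z | X₁, …, Xᵢ₋₁, Xᵢ₊₁, …, Xₙ] denote the conditional expectation of Z given all coordinates except the i-th. Then Var(Z) ≤ Σᵢ₌₁ⁿ E[ (Z − Eᵢ[Z])² ]. -/
/-!
Let `ℱ k = σ(X j : j < k)`. Telescoping the law of total variance along `ℱ` writes `Var Z` as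
`∑ᵢ E[(E[Z | ℱ (i+1)] - E[Z | ℱ i])²]`. Since `X i` is independent of the other coordinates and
`ℱ i ≤ σ(X j : j ≠ i)`, conditioning `Eᵢ[Z]` on `ℱ (i+1) = ℱ i ⊔ σ(X i)` gives the same as
conditioning it on `ℱ i`, namely `E[Z | ℱ i]`. Hence the `i`-th increment is
`E[Z - Eᵢ[Z] | ℱ (i+1)]`, and conditional expectation does not increase second moments.
-/

open MeasureTheory ProbabilityTheory

section SecondMoments

variable {Ω : Type*} {m m₁ m₂ m₀ : MeasurableSpace Ω} {μ : Measure Ω}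

lemma integral_sq_condExp_le [IsFiniteMeasure μ] (hm : m ≤ m₀) {W : Ω → ℝ}
    (hW : MemLp W 2 μ) : ∫ ω, (μ[W | m] ω) ^ 2 ∂μ ≤ ∫ ω, W ω ^ 2 ∂μ := by
  have hVar : 0 ≤ μ[Var[W; μ | m]] :=
    integral_nonneg_of_ae <| condExp_nonneg <| .of_forall fun ω => sq_nonneg _
  have hsq : ∫ ω, μ[W ^ 2 | m] ω ∂μ = ∫ ω, W ω ^ 2 ∂μ := integral_condExp hm
  rw [integral_congr_ae (condVar_ae_eq_condExp_sq_sub_sq_condExp hm hW),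
    integral_sub' (g := μ[W | m] ^ 2) integrable_condExp
      (hW.condExp one_le_two).integrable_sq] at hVar
  simp only [Pi.pow_apply] at hVar hsq
  linarith

lemma variance_condExp_eq_add [IsProbabilityMeasure μ] (h₁₂ : m₁ ≤ m₂) (h₂ : m₂ ≤ m₀)
    {Z : Ω → ℝ} (hZ : MemLp Z 2 μ) :
    Var[μ[Z | m₂]; μ] = Var[μ[Z | m₁]; μ] + ∫ ω, (μ[Z | m₂] ω - μ[Z | m₁] ω) ^ 2 ∂μ := by
  have htower : μ[μ[Z | m₂] | m₁] =ᵐ[μ] μ[Z | m₁] := condExp_condExp_of_le h₁₂ h₂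
  rw [← integral_condVar_add_variance_condExp (h₁₂.trans h₂) (hZ.condExp one_le_two),
    variance_congr htower, add_comm, condVar, integral_condExp (h₁₂.trans h₂)]
  congr 1
  refine integral_congr_ae ?_
  filter_upwards [htower] with ω hω
  simp [hω]

lemma variance_condExp_eq_add_sum [IsProbabilityMeasure μ] (ℱ : Filtration ℕ m₀)
    {Z : Ω → ℝ} (hZ : MemLp Z 2 μ) (n : ℕ) :
    Var[μ[Z | ℱ n]; μ] = Var[μ[Z | ℱ 0]; μ] +
      ∑ k ∈ Finset.range n, ∫ ω, (μ[Z | ℱ (k + 1)] ω - μ[Z | ℱ k] ω) ^ 2 ∂μ := by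
  induction n with
  | zero => simp
  | succ n ih =>
    rw [variance_condExp_eq_add (ℱ.mono n.le_succ) (ℱ.le _) hZ, ih, Finset.sum_range_succ,
      add_assoc]

end SecondMoments

section Independence

variable {Ω E : Type*} [NormedAddCommGroup E] [NormedSpace ℝ E]
  {m m₁ m₂ m₀ : MeasurableSpace Ω} {μ : Measure Ω}

lemma MeasurableSpace.sup_eq_generateFrom_image2_inter (m₁ m₂ : MeasurableSpace Ω) :
    m₁ ⊔ m₂ = generateFrom
      (Set.image2 (· ∩ ·) {s | MeasurableSet[m₁] s} {s | MeasurableSet[m₂] s}) := by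
  refine le_antisymm (sup_le ?_ ?_) (generateFrom_le ?_)
  · exact fun t ht => measurableSet_generateFrom ⟨t, ht, Set.univ, .univ, Set.inter_univ t⟩
  · exact fun t ht => measurableSet_generateFrom ⟨Set.univ, .univ, t, ht, Set.univ_inter t⟩
  · rintro _ ⟨t₁, h₁, t₂, h₂, rfl⟩
    exact (le_sup_left (b := m₂) _ h₁).inter (le_sup_right (a := m₁) _ h₂)

lemma isPiSystem_image2_inter (m₁ m₂ : MeasurableSpace Ω) :
    IsPiSystem (Set.image2 (· ∩ ·) {s | MeasurableSet[m₁] s} {s | MeasurableSet[m₂] s}) := by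
  rintro _ ⟨t₁, h₁, t₂, h₂, rfl⟩ _ ⟨u₁, g₁, u₂, g₂, rfl⟩ -
  exact ⟨t₁ ∩ u₁, h₁.inter g₁, t₂ ∩ u₂, h₂.inter g₂, Set.inter_inter_inter_comm t₁ u₁ t₂ u₂⟩

theorem setIntegral_eq_of_isPiSystem {s : Set (Set Ω)} (hm : m ≤ m₀)
    (h_eq : m = MeasurableSpace.generateFrom s) (h_inter : IsPiSystem s) {f g : Ω → E}
    (hf : Integrable f μ) (hg : Integrable g μ)
    (basic : ∀ t ∈ s, ∫ x in t, f x ∂μ = ∫ x in t, g x ∂μ)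
    (h_univ : ∫ x, f x ∂μ = ∫ x, g x ∂μ) {t : Set Ω} (ht : MeasurableSet[m] t) :
    ∫ x in t, f x ∂μ = ∫ x in t, g x ∂μ := by
  induction t, ht using MeasurableSpace.induction_on_inter h_eq h_inter with
  | empty => simp
  | basic t ht => exact basic t ht
  | compl t ht iht =>
    rw [setIntegral_compl (hm t ht) hf, setIntegral_compl (hm t ht) hg, iht, h_univ]
  | iUnion u hdisj hmeas iht =>
    rw [integral_iUnion (fun i => hm _ (hmeas i)) hdisj hf.integrableOn,
      integral_iUnion (fun i => hm _ (hmeas i)) hdisj hg.integrableOn]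
    exact tsum_congr iht

lemma setIntegral_inter_eq_of_indep [CompleteSpace E] [IsProbabilityMeasure μ]
    (hm₁ : m₁ ≤ m₀) (hm₂ : m₂ ≤ m₀) (hind : Indep m₁ m₂ μ) {f : Ω → E}
    (hf : StronglyMeasurable[m₁] f) (hfi : Integrable f μ)
    {t₁ t₂ : Set Ω} (ht₁ : MeasurableSet[m₁] t₁) (ht₂ : MeasurableSet[m₂] t₂) :
    ∫ x in t₁ ∩ t₂, f x ∂μ = μ.real t₂ • ∫ x in t₁, f x ∂μ := by
  have hfi' : Integrable (t₁.indicator f) μ := hfi.indicator (hm₁ _ ht₁)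
  calc ∫ x in t₁ ∩ t₂, f x ∂μ = ∫ x in t₂, t₁.indicator f x ∂μ := by
        rw [setIntegral_indicator (hm₁ _ ht₁), Set.inter_comm]
    _ = ∫ x in t₂, μ[t₁.indicator f | m₂] x ∂μ := (setIntegral_condExp hm₂ hfi' ht₂).symm
    _ = ∫ x in t₂, (∫ y, t₁.indicator f y ∂μ) ∂μ := setIntegral_congr_ae (hm₂ _ ht₂)
        ((condExp_indep_eq hm₁ hm₂ (hf.indicator ht₁) hind).mono fun x hx _ => hx)
    _ = μ.real t₂ • ∫ x in t₁, f x ∂μ := by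
        rw [setIntegral_const, integral_indicator (hm₁ _ ht₁)]

lemma condExp_sup_ae_eq_condExp_of_indep [CompleteSpace E] [IsProbabilityMeasure μ]
    (hm₁ : m₁ ≤ m) (hm : m ≤ m₀) (hm₂ : m₂ ≤ m₀) (hind : Indep m m₂ μ) {f : Ω → E}
    (hf : StronglyMeasurable[m] f) (hfi : Integrable f μ) :
    μ[f | m₁ ⊔ m₂] =ᵐ[μ] μ[f | m₁] := by
  have hsup : m₁ ⊔ m₂ ≤ m₀ := sup_le (hm₁.trans hm) hm₂
  refine (ae_eq_condExp_of_forall_setIntegral_eq hsup hfi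
    (fun _ _ _ => integrable_condExp.integrableOn) (fun t ht _ => ?_)
    ((stronglyMeasurable_condExp.mono (le_sup_left (b := m₂))).aestronglyMeasurable
      (μ := μ))).symm
  refine setIntegral_eq_of_isPiSystem hsup
    (MeasurableSpace.sup_eq_generateFrom_image2_inter m₁ m₂) (isPiSystem_image2_inter m₁ m₂)
    integrable_condExp hfi ?_ (integral_condExp (hm₁.trans hm)) ht
  rintro _ ⟨t₁, h₁, t₂, h₂, rfl⟩
  rw [setIntegral_inter_eq_of_indep hm hm₂ hind (stronglyMeasurable_condExp.mono hm₁)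
      integrable_condExp (hm₁ _ h₁) h₂,
    setIntegral_inter_eq_of_indep hm hm₂ hind hf hfi (hm₁ _ h₁) h₂,
    setIntegral_condExp (hm₁.trans hm) hfi h₁]

lemma integral_sq_condExp_sup_sub_condExp_le [IsProbabilityMeasure μ] (hm₁ : m₁ ≤ m)
    (hm : m ≤ m₀) (hm₂ : m₂ ≤ m₀) (hind : Indep m m₂ μ) {Z : Ω → ℝ} (hZ : MemLp Z 2 μ) :
    ∫ ω, (μ[Z | m₁ ⊔ m₂] ω - μ[Z | m₁] ω) ^ 2 ∂μ ≤ ∫ ω, (Z ω - μ[Z | m] ω) ^ 2 ∂μ := by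
  have hdiff : μ[Z - μ[Z | m] | m₁ ⊔ m₂] =ᵐ[μ] μ[Z | m₁ ⊔ m₂] - μ[Z | m₁] := by
    filter_upwards [condExp_sub (m := m₁ ⊔ m₂) (hZ.integrable one_le_two) integrable_condExp,
      condExp_sup_ae_eq_condExp_of_indep (f := μ[Z | m]) hm₁ hm hm₂ hind
        stronglyMeasurable_condExp integrable_condExp,
      condExp_condExp_of_le (f := Z) hm₁ hm] with ω hsub hsup htower
    rw [hsub, Pi.sub_apply, Pi.sub_apply, hsup, htower]
  calc ∫ ω, (μ[Z | m₁ ⊔ m₂] ω - μ[Z | m₁] ω) ^ 2 ∂μ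
      = ∫ ω, (μ[Z - μ[Z | m] | m₁ ⊔ m₂] ω) ^ 2 ∂μ :=
        integral_congr_ae (hdiff.mono fun ω hω => by dsimp only; rw [hω, Pi.sub_apply])
    _ ≤ ∫ ω, (Z ω - μ[Z | m] ω) ^ 2 ∂μ :=
        integral_sq_condExp_le (sup_le (hm₁.trans hm) hm₂) (hZ.sub (hZ.condExp one_le_two))

end Independence

lemma ProbabilityTheory.iIndepFun.indep_iSup_erase {Ω ι χ : Type*} {mΩ : MeasurableSpace Ω}
    [MeasurableSpace χ] [Fintype ι] [DecidableEq ι] {μ : Measure Ω} [IsProbabilityMeasure μ]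
    {X : ι → Ω → χ} (hX : ∀ i, Measurable (X i)) (hindep : iIndepFun X μ) (i : ι) :
    Indep (⨆ j ∈ Finset.univ.erase i, MeasurableSpace.comap (X j) inferInstance)
      (MeasurableSpace.comap (X i) inferInstance) μ := by
  simpa using indep_iSup_of_disjoint (fun j => (hX j).comap_le) hindep.iIndep
    (S := {j | j ∈ Finset.univ.erase i}) (T := {i}) (by simp)

section CoordinateFiltration

variable {Ω χ : Type*} {mΩ : MeasurableSpace Ω} [MeasurableSpace χ] {n : ℕ}

def coordinateFiltration (X : Fin n → Ω → χ) (hX : ∀ i, Measurable (X i)) :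
    Filtration ℕ mΩ where
  seq k := ⨆ (j : Fin n) (_ : (j : ℕ) < k), MeasurableSpace.comap (X j) inferInstance
  mono' _ _ hkl := iSup₂_mono' fun j hj => ⟨j, hj.trans_le hkl, le_rfl⟩
  le' _ := iSup₂_le fun j _ => (hX j).comap_le

variable {X : Fin n → Ω → χ} {hX : ∀ i, Measurable (X i)}

lemma coordinateFiltration_zero : coordinateFiltration X hX 0 = ⊥ := by
  simp [coordinateFiltration]

lemma coordinateFiltration_succ (i : Fin n) :
    coordinateFiltration X hX ((i : ℕ) + 1) =
      coordinateFiltration X hX i ⊔ MeasurableSpace.comap (X i) inferInstance := by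
  refine le_antisymm (iSup₂_le fun j hj => ?_) (sup_le ?_ ?_)
  · rcases eq_or_ne j i with rfl | hji
    · exact le_sup_right
    · exact le_sup_of_le_left <| le_iSup₂ (f := fun (j : Fin n) (_ : (j : ℕ) < i) =>
        MeasurableSpace.comap (X j) inferInstance) j
        ((Nat.lt_succ_iff.1 hj).lt_of_ne (Fin.val_ne_of_ne hji))
  · exact iSup₂_mono' fun j hj => ⟨j, hj.trans (Nat.lt_succ_self i), le_rfl⟩
  · exact le_iSup₂ (f := fun (j : Fin n) (_ : (j : ℕ) < (i : ℕ) + 1) =>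
      MeasurableSpace.comap (X j) inferInstance) i (Nat.lt_succ_self i)

lemma coordinateFiltration_le_iSup_erase (i : Fin n) :
    coordinateFiltration X hX i ≤
      ⨆ j ∈ Finset.univ.erase i, MeasurableSpace.comap (X j) inferInstance :=
  iSup₂_mono' fun j hj => ⟨j, Finset.mem_erase.2 ⟨ne_of_lt (show j < i from hj),
    Finset.mem_univ j⟩, le_rfl⟩

lemma measurable_coordinateFiltration_last :
    Measurable[coordinateFiltration X hX n] (fun ω i => X i ω) :=
  @measurable_pi_lambda Ω (Fin n) (fun _ => χ) (coordinateFiltration X hX n) _ _ fun i =>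
    measurable_iff_comap_le.2 (le_iSup₂ (f := fun (j : Fin n) (_ : (j : ℕ) < n) =>
      MeasurableSpace.comap (X j) inferInstance) i i.isLt)

end CoordinateFiltration

/-- Efron–Stein inequality: for independent random variables `X₁, …, Xₙ` with values
in a measurable space `χ` and a measurable `g : χⁿ → ℝ` with `Z = g(X₁, …, Xₙ)`
square-integrable, `Var(Z) ≤ Σᵢ E[(Z − Eᵢ[Z])²]`, where `Eᵢ[Z]` is the conditional
expectation of `Z` given all the coordinates except the `i`-th. -/
theorem efron_stein_inequality {Ω χ : Type*} {mΩ : MeasurableSpace Ω}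
    [MeasurableSpace χ] (μ : Measure Ω) [IsProbabilityMeasure μ]
    (n : ℕ) (X : Fin n → Ω → χ)
    (hmeas : ∀ i, Measurable (X i))
    (hindep : iIndepFun X μ)
    (g : (Fin n → χ) → ℝ) (hg : Measurable g)
    (Z : Ω → ℝ) (hZ : Z = fun ω => g (fun i => X i ω))
    (hZ2 : MemLp Z 2 μ) :
    variance Z μ ≤
      ∑ i, ∫ ω, (Z ω -
        (μ[Z | ⨆ j ∈ Finset.univ.erase i, MeasurableSpace.comap (X j) inferInstance]) ω) ^ 2 ∂μ := by
  set ℱ := coordinateFiltration X hmeas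
  have hZℱ : μ[Z | ℱ n] = Z := condExp_of_stronglyMeasurable (ℱ.le n)
    (hZ ▸ hg.comp measurable_coordinateFiltration_last : Measurable[ℱ n] Z).stronglyMeasurable
    (hZ2.integrable one_le_two)
  have hℱ₀ : Var[μ[Z | ℱ 0]; μ] = 0 := by
    rw [coordinateFiltration_zero, condExp_bot, ← covariance_self aemeasurable_const,
      covariance_const_left]
  calc Var[Z; μ]
      = ∑ k ∈ Finset.range n, ∫ ω, (μ[Z | ℱ (k + 1)] ω - μ[Z | ℱ k] ω) ^ 2 ∂μ := by
        rw [← zero_add (∑ k ∈ _, _), ← hℱ₀, ← variance_condExp_eq_add_sum ℱ hZ2 n, hZℱ]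
    _ = ∑ i : Fin n, ∫ ω, (μ[Z | ℱ (i + 1)] ω - μ[Z | ℱ i] ω) ^ 2 ∂μ :=
        (Fin.sum_univ_eq_sum_range _ n).symm
    _ ≤ _ := Finset.sum_le_sum fun i _ => by
        rw [coordinateFiltration_succ]
        exact integral_sq_condExp_sup_sub_condExp_le (coordinateFiltration_le_iSup_erase i)
          (iSup₂_le fun j _ => (hmeas j).comap_le) (hmeas i).comap_le
          (hindep.indep_iSup_erase hmeas i) hZ2
end

section
/- McDiarmid's (bounded differences) inequality: Let X₁, …, Xₘ be independent random variables taking values in a measurable space χ, and let f : χᵐ → ℝ be a measurable function satisfying the bounded differences condition: for every i and all x₁, …, xₘ, xᵢ′ ∈ χ, |f(x₁, …, xᵢ, …, xₘ) − f(x₁, …, xᵢ′, …, xₘ)| ≤ cᵢ. Then for every ε > 0, P( f(X₁, …, Xₘ) − E[f(X₁, …, Xₘ)] ≥ ε ) ≤ exp( −2ε² / Σᵢ₌₁ᵐ cᵢ² ). -/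
open MeasureTheory ProbabilityTheory Real
open scoped NNReal

/-! Induction on the number of coordinates of the product measure `Measure.pi μ`. Splitting
`x = (x₀, y)` and writing `h x₀ = E_y f (x₀, y)`, we have
`f x - E f = (h x₀ - E h) + (f (x₀, y) - h x₀)`. The function `h` takes values in an interval of
length `c₀`, so Hoeffding's lemma makes the first term sub-Gaussian with parameter `c₀² / 4`;
for every fixed `x₀` the second term is sub-Gaussian with parameter `∑_{i > 0} cᵢ² / 4` by
induction, and integrating first in `y` shows that the parameters add up. Independence identifies
the law of `(X₁, …, Xₘ)` with the product of the marginals, and the Chernoff bound for a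
sub-Gaussian variable with parameter `∑ cᵢ² / 4` is the claimed tail estimate. -/

theorem exists_forall_mem_Icc_of_abs_sub_le {α : Type*} {g : α → ℝ} {c : ℝ}
    (h : ∀ x y, |g x - g y| ≤ c) : ∃ a, ∀ x, g x ∈ Set.Icc a (a + c) := by
  rcases isEmpty_or_nonempty α with hα | hα
  · exact ⟨0, isEmptyElim⟩
  obtain ⟨x₀⟩ := id hα
  have hbdd : BddBelow (Set.range g) :=
    ⟨g x₀ - c, by rintro _ ⟨x, rfl⟩; linarith [(abs_le.1 (h x₀ x)).2]⟩
  refine ⟨⨅ x, g x, fun x => ⟨ciInf_le hbdd x, ?_⟩⟩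
  have : g x - c ≤ ⨅ y, g y := le_ciInf fun y => by linarith [(abs_le.1 (h x y)).2]
  linarith

theorem abs_sub_le_sum_of_abs_sub_update_le {ι : Type*} [Fintype ι] [DecidableEq ι]
    {α : ι → Type*} {f : (∀ i, α i) → ℝ} {c : ι → ℝ}
    (hf : ∀ i x x', |f x - f (Function.update x i x')| ≤ c i) (x y : ∀ i, α i) :
    |f x - f y| ≤ ∑ i, c i := by
  suffices ∀ s : Finset ι, ∀ x, (∀ i ∉ s, x i = y i) → |f x - f y| ≤ ∑ i ∈ s, c i from
    this Finset.univ x (by simp)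
  intro s
  induction s using Finset.induction_on with
  | empty => intro x hx; simp [funext fun i => hx i (Finset.notMem_empty i)]
  | insert i s hi ih =>
    intro x hx
    have hupd : ∀ j ∉ s, Function.update x i (y i) j = y j := by
      intro j hj
      rcases eq_or_ne j i with rfl | hji
      · simp
      · rw [Function.update_of_ne hji]; exact hx j (by simp [hji, hj])
    calc |f x - f y|
        ≤ |f x - f (Function.update x i (y i))| + |f (Function.update x i (y i)) - f y| :=
          abs_sub_le _ _ _
      _ ≤ c i + ∑ j ∈ s, c j := add_le_add (hf i x (y i)) (ih _ hupd)
      _ = ∑ j ∈ insert i s, c j := (Finset.sum_insert hi).symm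

theorem measurable_fin_cons {n : ℕ} {α : Fin (n + 1) → Type*} [∀ i, MeasurableSpace (α i)] :
    Measurable (fun p : α 0 × (∀ j : Fin n, α j.succ) => (Fin.cons p.1 p.2 : ∀ i, α i)) :=
  measurable_pi_iff.2 fun i => by
    cases i using Fin.cases <;> simp only [Fin.cons_zero, Fin.cons_succ] <;> fun_prop

theorem measurePreserving_fin_head_tail {n : ℕ} {α : Fin (n + 1) → Type*}
    [∀ i, MeasurableSpace (α i)] (μ : ∀ i, Measure (α i)) [∀ i, SigmaFinite (μ i)] :
    MeasurePreserving (fun x : ∀ i, α i => (x 0, Fin.tail x)) (Measure.pi μ)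
      ((μ 0).prod (Measure.pi fun j => μ j.succ)) :=
  measurePreserving_piFinSuccAbove μ 0

namespace ProbabilityTheory

section Product

variable {α β : Type*} [MeasurableSpace α] [MeasurableSpace β] {μ : Measure α} {ν : Measure β}

theorem HasSubgaussianMGF.add_prod [SFinite μ] [SFinite ν]
    {X : α → ℝ} {Y : α × β → ℝ} {cX cY : ℝ≥0}
    (hX : HasSubgaussianMGF X cX μ) (hY : ∀ᵐ x ∂μ, HasSubgaussianMGF (fun y => Y (x, y)) cY ν)
    (hint : ∀ t, Integrable (fun p => exp (t * (X p.1 + Y p))) (μ.prod ν)) :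
    HasSubgaussianMGF (fun p => X p.1 + Y p) (cX + cY) (μ.prod ν) where
  integrable_exp_mul := hint
  mgf_le t := calc
    mgf (fun p => X p.1 + Y p) (μ.prod ν) t
      = ∫ x, exp (t * X x) * mgf (fun y => Y (x, y)) ν t ∂μ := by
        rw [mgf, integral_prod _ (hint t)]
        simp_rw [mgf, mul_add, exp_add, integral_const_mul]
    _ ≤ ∫ x, exp (t * X x) * exp (cY * t ^ 2 / 2) ∂μ := by
        refine integral_mono_of_nonneg (ae_of_all _ fun x => mul_nonneg (exp_pos _).le mgf_nonneg)
          ((hX.integrable_exp_mul t).mul_const _) ?_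
        filter_upwards [hY] with x hx
        gcongr
        exact hx.mgf_le t
    _ ≤ exp (cX * t ^ 2 / 2) * exp (cY * t ^ 2 / 2) := by
        rw [integral_mul_const]
        gcongr
        exact hX.mgf_le t
    _ = exp (↑(cX + cY) * t ^ 2 / 2) := by
        rw [← exp_add, NNReal.coe_add]; ring_nf

theorem hasSubgaussianMGF_prod_sub_integral [IsProbabilityMeasure μ] [IsProbabilityMeasure ν]
    {g : α × β → ℝ} (hg : Measurable g) {a b : ℝ} (hgab : ∀ p, g p ∈ Set.Icc a b)
    {c : ℝ} (hosc : ∀ x x' y, |g (x, y) - g (x', y)| ≤ c) {cY : ℝ≥0}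
    (hY : ∀ x, HasSubgaussianMGF (fun y => g (x, y) - ∫ y', g (x, y') ∂ν) cY ν) :
    HasSubgaussianMGF (fun p => g p - ∫ q, g q ∂(μ.prod ν)) ((‖c‖₊ / 2) ^ 2 + cY)
      (μ.prod ν) := by
  set h : α → ℝ := fun x => ∫ y, g (x, y) ∂ν
  have hsec_int (x : α) : Integrable (fun y => g (x, y)) ν :=
    .of_mem_Icc a b (hg.comp measurable_prodMk_left).aemeasurable (ae_of_all _ fun y => hgab _)
  have hh_osc (x x' : α) : |h x - h x'| ≤ c := by
    simpa [h, ← integral_sub (hsec_int x) (hsec_int x')] using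
      norm_integral_le_of_norm_le_const (μ := ν)
        (f := fun y => g (x, y) - g (x', y)) (ae_of_all _ fun y => hosc x x' y)
  obtain ⟨a', ha'⟩ := exists_forall_mem_Icc_of_abs_sub_le hh_osc
  have hX : HasSubgaussianMGF (fun x => h x - ∫ x', h x' ∂μ) ((‖c‖₊ / 2) ^ 2) μ := by
    simpa using hasSubgaussianMGF_of_mem_Icc
      (hg.stronglyMeasurable.integral_prod_right' (ν := ν)).aemeasurable (ae_of_all μ ha')
  have hsplit (p : α × β) :
      g p - ∫ q, g q ∂(μ.prod ν) = (h p.1 - ∫ x, h x ∂μ) + (g p - h p.1) := by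
    rw [integral_prod g (.of_mem_Icc a b hg.aemeasurable (ae_of_all _ hgab))]
    ring
  have hint (t : ℝ) :
      Integrable (fun p => exp (t * (g p - ∫ q, g q ∂(μ.prod ν)))) (μ.prod ν) :=
    integrable_exp_mul_of_mem_Icc (hg.sub_const _).aemeasurable
      (ae_of_all _ fun p => ⟨sub_le_sub_right (hgab p).1 _, sub_le_sub_right (hgab p).2 _⟩)
  simp_rw [hsplit] at hint ⊢
  exact hX.add_prod (ae_of_all _ hY) hint

end Product

theorem hasSubgaussianMGF_pi_sub_integral {n : ℕ} {α : Fin n → Type*}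
    [∀ i, MeasurableSpace (α i)] (μ : ∀ i, Measure (α i)) [∀ i, IsProbabilityMeasure (μ i)]
    {f : (∀ i, α i) → ℝ} (hf : Measurable f) {c : Fin n → ℝ}
    (hbd : ∀ i x x', |f x - f (Function.update x i x')| ≤ c i) :
    HasSubgaussianMGF (fun x => f x - ∫ y, f y ∂Measure.pi μ) (∑ i, (‖c i‖₊ / 2) ^ 2)
      (Measure.pi μ) := by
  induction n with
  | zero =>
    have hconst (x : ∀ i, α i) : f x - ∫ y, f y ∂Measure.pi μ = 0 := by
      rw [integral_eq_const (c := f x) (ae_of_all _ fun y => congrArg f (Subsingleton.elim y x)),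
        sub_self]
    simp [hconst]
  | succ n ih =>
    let g (p : α 0 × ∀ j : Fin n, α j.succ) : ℝ := f (Fin.cons p.1 p.2)
    have hg : Measurable g := hf.comp measurable_fin_cons
    obtain ⟨a, ha⟩ := exists_forall_mem_Icc_of_abs_sub_le (abs_sub_le_sum_of_abs_sub_update_le hbd)
    have hstep := hasSubgaussianMGF_prod_sub_integral (μ := μ 0)
      (ν := Measure.pi fun j => μ j.succ) hg (fun p => ha _)
      (fun x x' y => by simpa [g, Fin.update_cons_zero] using hbd 0 (Fin.cons x y) x')
      (fun x => ih (fun j => μ j.succ) (f := fun y => g (x, y)) (hg.comp measurable_prodMk_left)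
        (c := fun j => c j.succ) fun j y y' => by
          change |f (Fin.cons x y) - f (Fin.cons x (Function.update y j y'))| ≤ _
          rw [Fin.cons_update]
          exact hbd j.succ (Fin.cons x y) y')
    have hmp := measurePreserving_fin_head_tail μ
    have hgf (x : ∀ i, α i) : g (x 0, Fin.tail x) = f x := congrArg f (Fin.cons_self_tail x)
    rw [← hmp.map_eq, integral_map hmp.measurable.aemeasurable hg.aestronglyMeasurable] at hstep
    simpa [Function.comp_def, hgf, Fin.sum_univ_succ] using hstep.of_map hmp.measurable.aemeasurable

end ProbabilityTheory

theorem mcdiarmid_inequality_general {Ω χ : Type*} {mΩ : MeasurableSpace Ω}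
    [MeasurableSpace χ] (μ : Measure Ω) [IsProbabilityMeasure μ]
    (m : ℕ) (X : Fin m → Ω → χ)
    (hmeas : ∀ i, Measurable (X i))
    (hindep : iIndepFun X μ)
    (f : (Fin m → χ) → ℝ) (hf : Measurable f)
    (c : Fin m → ℝ)
    (hbd : ∀ (i : Fin m) (x : Fin m → χ) (x' : χ),
      |f x - f (Function.update x i x')| ≤ c i)
    (ε : ℝ) (hε : 0 < ε) :
    (μ {ω | ε ≤ f (fun i => X i ω) - ∫ ω', f (fun i => X i ω') ∂μ}).toReal ≤
      Real.exp (-2 * ε ^ 2 / ∑ i, c i ^ 2) := by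
  have hX : Measurable fun ω i => X i ω := measurable_pi_lambda _ hmeas
  have := fun i => Measure.isProbabilityMeasure_map (μ := μ) (hmeas i).aemeasurable
  have hsub := hasSubgaussianMGF_pi_sub_integral (fun i => μ.map (X i)) hf hbd
  rw [← hindep.map_fun_eq_pi_map fun i => (hmeas i).aemeasurable,
    integral_map hX.aemeasurable hf.aestronglyMeasurable] at hsub
  have hparam : 2 * ((∑ i, (‖c i‖₊ / 2) ^ 2 : ℝ≥0) : ℝ) = (∑ i, c i ^ 2) / 2 := by
    push_cast
    simp only [Real.norm_eq_abs, div_pow, sq_abs, ← Finset.sum_div]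
    ring
  calc (μ {ω | ε ≤ f (fun i => X i ω) - ∫ ω', f (fun i => X i ω') ∂μ}).toReal
      ≤ exp (-ε ^ 2 / (2 * ((∑ i, (‖c i‖₊ / 2) ^ 2 : ℝ≥0) : ℝ))) :=
        (hsub.of_map hX.aemeasurable).measure_ge_le hε.le
    _ = exp (-2 * ε ^ 2 / ∑ i, c i ^ 2) := by
        rw [hparam, div_div_eq_mul_div]
        ring_nf

/-- McDiarmid's (bounded differences) inequality: if `X₁, …, Xₘ` are independent
`χ`-valued random variables and `f : χᵐ → ℝ` satisfies the bounded differences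
condition with constants `cᵢ`, then for every `ε > 0`,
`P(f(X) − E[f(X)] ≥ ε) ≤ exp(−2ε² / Σᵢ cᵢ²)`. -/
theorem mcdiarmid_inequality {Ω χ : Type*} {mΩ : MeasurableSpace Ω}
    [MeasurableSpace χ] (μ : Measure Ω) [IsProbabilityMeasure μ]
    (m : ℕ) (X : Fin m → Ω → χ)
    (hmeas : ∀ i, Measurable (X i))
    (hindep : iIndepFun X μ)
    (f : (Fin m → χ) → ℝ) (hf : Measurable f)
    (c : Fin m → ℝ) (hc : ∀ i, 0 < c i)
    (hbd : ∀ (i : Fin m) (x : Fin m → χ) (x' : χ),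
      |f x - f (Function.update x i x')| ≤ c i)
    (hint : Integrable (fun ω => f (fun i => X i ω)) μ)
    (ε : ℝ) (hε : 0 < ε) :
    (μ {ω | ε ≤ f (fun i => X i ω) - ∫ ω', f (fun i => X i ω') ∂μ}).toReal ≤
      Real.exp (-2 * ε ^ 2 / ∑ i, c i ^ 2) :=
  mcdiarmid_inequality_general (mΩ := mΩ) μ m X hmeas hindep f hf c hbd ε hε
end
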